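/- Let (X,μ) be a probability space, G and H countable groups, and α: X × G → H a measurable map. Fix g ∈ G and let 𝒫 = {P_{g,h} : h ∈ H} where P_{g,h} = {x ∈ X : α(x,g) = h}. Suppose for every h ∈ H there is a countable measurable partition {D_n^h}_{n∈ℕ} of P_{g,h} such that for every n there is a finite set F_n ⊂ H with D_n^h = ∅ whenever h ∉ F_n, and such that ∑_{n=1}^∞ −μ(⋃_{h∈F_n} D_n^h) · log( μ(⋃_{h∈F_n} D_n^h) / |F_n| ) < ∞. Then the Shannon entropy ∑_{h∈H} −μ(P_{g,h}) log μ(P_{g,h}) of 𝒫 is finite. -/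

import Mathlib

/-!
Since `D n h ⊆ P h`, we have
`-μ(P h) log μ(P h) = ∑ₙ -μ(D n h) log μ(P h) ≤ ∑ₙ -μ(D n h) log μ(D n h)`.
Summing over `h` and exchanging the sums, the `n`-th row is the entropy of at most `#(F n)`
disjoint pieces of total mass `μ(⋃ h ∈ F n, D n h)`, which the equipartition bound dominates by
the `n`-th term of the given summable series.
-/

open MeasureTheory Function

namespace Real

theorem sum_negMulLog_le_neg_mul_log_div_card {ι : Type*} (s : Finset ι) {a : ι → ℝ}
    (ha : ∀ i ∈ s, 0 ≤ a i) :
    ∑ i ∈ s, negMulLog (a i) ≤ -(∑ i ∈ s, a i) * log ((∑ i ∈ s, a i) / s.card) := by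
  rcases s.eq_empty_or_nonempty with rfl | hs
  · simp
  have hcard : (0 : ℝ) < s.card := by exact_mod_cast hs.card_pos
  -- Jensen for the concave `negMulLog` with uniform weights `1 / #s`.
  have jensen := concaveOn_negMulLog.le_map_sum (t := s) (w := fun _ => (s.card : ℝ)⁻¹)
    (p := a) (fun _ _ => by positivity) (by simp [hcard.ne']) ha
  simp only [smul_eq_mul, inv_mul_eq_div, ← Finset.sum_div] at jensen
  rw [div_le_iff₀ hcard] at jensen
  calc ∑ i ∈ s, negMulLog (a i) ≤ negMulLog ((∑ i ∈ s, a i) / s.card) * s.card := jensen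
    _ = _ := by rw [negMulLog]; field_simp

theorem sum_negMulLog_le_of_eq_zero_of_notMem {ι : Type*} (S F : Finset ι) {a : ι → ℝ}
    (ha₀ : ∀ i, 0 ≤ a i) (ha₁ : ∀ i, a i ≤ 1) (hF : ∀ i ∉ F, a i = 0) :
    ∑ i ∈ S, negMulLog (a i) ≤ -(∑ i ∈ F, a i) * log ((∑ i ∈ F, a i) / F.card) := by
  classical
  calc ∑ i ∈ S, negMulLog (a i) = ∑ i ∈ S ∩ F, negMulLog (a i) :=
        (Finset.sum_subset Finset.inter_subset_left fun i hiS hi =>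
          by simp [hF i fun hiF => hi (Finset.mem_inter.2 ⟨hiS, hiF⟩)]).symm
    _ ≤ ∑ i ∈ F, negMulLog (a i) :=
        Finset.sum_le_sum_of_subset_of_nonneg Finset.inter_subset_right
          fun i _ _ => negMulLog_nonneg (ha₀ i) (ha₁ i)
    _ ≤ _ := sum_negMulLog_le_neg_mul_log_div_card F fun i _ => ha₀ i

theorem mul_neg_log_le_negMulLog {a p : ℝ} (ha : 0 ≤ a) (hap : a ≤ p) :
    a * -log p ≤ negMulLog a := by
  rcases ha.eq_or_lt with rfl | ha
  · simp
  rw [negMulLog, neg_mul, mul_neg, neg_le_neg_iff]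
  exact mul_le_mul_of_nonneg_left (log_le_log ha hap) ha.le

theorem summable_negMulLog_of_hasSum {ι : Type*} {p : ι → ℝ} {a : ℕ → ι → ℝ} {c : ℕ → ℝ}
    (ha : ∀ n i, 0 ≤ a n i) (hp : ∀ i, HasSum (fun n => a n i) (p i)) (hp₁ : ∀ i, p i ≤ 1)
    (hc : Summable c) (hbound : ∀ n (S : Finset ι), ∑ i ∈ S, negMulLog (a n i) ≤ c n) :
    Summable fun i => negMulLog (p i) := by
  have hp₀ i : 0 ≤ p i := (hp i).nonneg fun n => ha n i
  have hterm i : HasSum (fun n => a n i * -log (p i)) (negMulLog (p i)) := by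
    simpa [negMulLog, mul_comm] using (hp i).mul_right (-log (p i))
  refine summable_of_sum_le (c := ∑' n, c n) (fun i => negMulLog_nonneg (hp₀ i) (hp₁ i))
    fun S => ?_
  rw [← (hasSum_sum fun i _ => hterm i).tsum_eq]
  refine (summable_sum fun i _ => (hterm i).summable).tsum_le_tsum (fun n => ?_) hc
  calc ∑ i ∈ S, a n i * -log (p i) ≤ ∑ i ∈ S, negMulLog (a n i) :=
        Finset.sum_le_sum fun i _ =>
          mul_neg_log_le_negMulLog (ha n i) (le_hasSum (hp i) n fun m _ => ha m i)
    _ ≤ c n := hbound n S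

end Real

theorem MeasureTheory.hasSum_measureReal_iUnion {X ι : Type*} [MeasurableSpace X] [Countable ι]
    {μ : Measure X} [IsFiniteMeasure μ] {s : ι → Set X} (hd : Pairwise (Disjoint on s))
    (hm : ∀ i, MeasurableSet (s i)) :
    HasSum (fun i => μ.real (s i)) (μ.real (⋃ i, s i)) := by
  have h := measure_iUnion (μ := μ) hd hm
  rw [measureReal_def, h, ENNReal.tsum_toReal_eq fun _ => measure_ne_top _ _]
  exact ENNReal.hasSum_toReal (h ▸ measure_ne_top μ _)

theorem stmt0_general {X : Type*} [MeasurableSpace X] (μ : Measure X) [IsProbabilityMeasure μ]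
    {G H : Type*}
    (α : X → G → H) (g : G)
    (P : H → Set X) (hP : ∀ h, P h = {x | α x g = h})
    (D : ℕ → H → Set X) (hDmeas : ∀ n h, MeasurableSet (D n h))
    (hDdisj : ∀ h, Pairwise (Function.onFun Disjoint fun n => D n h))
    (hDunion : ∀ h, (⋃ n, D n h) = P h)
    (F : ℕ → Finset H)
    (hF : ∀ n, ∀ h, h ∉ F n → D n h = ∅)
    (hsum : Summable fun n =>
      -(μ (⋃ h ∈ F n, D n h)).toReal *
        Real.log ((μ (⋃ h ∈ F n, D n h)).toReal / (F n).card)) :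
    Summable fun h => -(μ (P h)).toReal * Real.log (μ (P h)).toReal := by
  have hDsub n h : D n h ⊆ P h := hDunion h ▸ Set.subset_iUnion (fun m => D m h) n
  have hPdisj : Pairwise (Disjoint on P) := fun h₁ h₂ hne =>
    Set.disjoint_left.2 fun x hx₁ hx₂ => hne <| by
      rw [hP, Set.mem_ofPred_eq] at hx₁ hx₂; exact hx₁.symm.trans hx₂
  have hunion n : μ.real (⋃ h ∈ F n, D n h) = ∑ h ∈ F n, μ.real (D n h) :=
    measureReal_biUnion_finset (fun h₁ _ h₂ _ hne => (hPdisj hne).mono (hDsub n h₁) (hDsub n h₂))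
      fun h _ => hDmeas n h
  refine Real.summable_negMulLog_of_hasSum (a := fun n h => μ.real (D n h))
    (fun _ _ => measureReal_nonneg)
    (fun h => hDunion h ▸ hasSum_measureReal_iUnion (hDdisj h) fun n => hDmeas n h)
    (fun _ => measureReal_le_one) hsum fun n S => ?_
  simp only [← measureReal_def, hunion]
  exact Real.sum_negMulLog_le_of_eq_zero_of_notMem S (F n) (fun _ => measureReal_nonneg)
    (fun _ => measureReal_le_one) fun h hh => by simp [hF n h hh]

theorem stmt0 {X : Type*} [MeasurableSpace X] (μ : Measure X) [IsProbabilityMeasure μ]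
    {G H : Type*} [Countable G] [Countable H]
    (α : X → G → H) (hαmeas : ∀ (g : G) (h : H), MeasurableSet {x | α x g = h}) (g : G)
    (P : H → Set X) (hP : ∀ h, P h = {x | α x g = h})
    (D : ℕ → H → Set X) (hDmeas : ∀ n h, MeasurableSet (D n h))
    (hDdisj : ∀ h, Pairwise (Function.onFun Disjoint fun n => D n h))
    (hDunion : ∀ h, (⋃ n, D n h) = P h)
    (F : ℕ → Finset H)
    (hF : ∀ n, ∀ h, h ∉ F n → D n h = ∅)
    (hsum : Summable fun n =>
      -(μ (⋃ h ∈ F n, D n h)).toReal *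
        Real.log ((μ (⋃ h ∈ F n, D n h)).toReal / (F n).card)) :
    Summable fun h => -(μ (P h)).toReal * Real.log (μ (P h)).toReal :=
  stmt0_general μ α g P hP D hDmeas hDdisj hDunion F hF hsum
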